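/- Let X be a locally convex space and ε ≥ 0 such that every ε-maximal monotone operator T : X ⇉ X* is locally bounded on core(conv D(T)). Then X is barreled. -/

import Mathlib

open Topology Set

noncomputable section

variable {X : Type*} [AddCommGroup X] [Module ℝ X] [TopologicalSpace X]

/-- pointwise-bounded subset of the dual -/
def PtwBounded (B : Set (X →L[ℝ] ℝ)) : Prop :=
  ∀ x : X, ∃ M : ℝ, ∀ f ∈ B, |f x| ≤ M

/-- equicontinuous: contained in the polar of a neighborhood of 0 -/
def Equicont (B : Set (X →L[ℝ] ℝ)) : Prop :=
  ∃ V ∈ 𝓝 (0 : X), ∀ f ∈ B, ∀ x ∈ V, |f x| ≤ 1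

variable (X) in
/-- Banach–Steinhaus property -/
def BSProp : Prop := ∀ B : Set (X →L[ℝ] ℝ), PtwBounded B → Equicont B

variable (X) in
/-- the weak topology on X -/
def weakTop : TopologicalSpace X :=
  TopologicalSpace.induced (fun x => fun f : X →L[ℝ] ℝ => f x) inferInstance

def WeaklyClosed (C : Set X) : Prop := @IsClosed X (weakTop X) C

def WeakLSC (f : X → EReal) : Prop := @LowerSemicontinuous X EReal (weakTop X) _ f

/-- algebraic interior -/
def core (A : Set X) : Set X :=
  {a | ∀ x : X, ∃ μ > (0:ℝ), ∀ l : ℝ, 0 ≤ l → l ≤ μ → a + l • x ∈ A}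

/-- Fitzpatrick function of a multifunction given by its graph -/
def fitz (T : Set (X × (X →L[ℝ] ℝ))) (z : X × (X →L[ℝ] ℝ)) : EReal :=
  ⨆ p : T, ((z.2 p.1.1 + p.1.2 z.1 - p.1.2 p.1.1 : ℝ) : EReal)

def fitzDom (T : Set (X × (X →L[ℝ] ℝ))) : Set (X × (X →L[ℝ] ℝ)) :=
  {z | fitz T z < ⊤}

/-- local boundedness of a multifunction at a point -/
def LocBddAt (T : Set (X × (X →L[ℝ] ℝ))) (x₀ : X) : Prop :=
  ∃ U ∈ 𝓝 x₀, Equicont {g | ∃ p ∈ T, p.1 ∈ U ∧ p.2 = g}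

/-- ε-monotone operator -/
def EMonotone (ε : ℝ) (T : Set (X × (X →L[ℝ] ℝ))) : Prop :=
  ∀ p ∈ T, ∀ q ∈ T, -ε ≤ p.2 p.1 - p.2 q.1 - q.2 p.1 + q.2 q.1

/-- ε-maximal monotone operator -/
def MaxEMonotone (ε : ℝ) (T : Set (X × (X →L[ℝ] ℝ))) : Prop :=
  T.Nonempty ∧ EMonotone ε T ∧ ∀ S, EMonotone ε S → T ⊆ S → S = T

/-- support function with values in EReal -/
def sigmaE (B : Set (X →L[ℝ] ℝ)) (x : X) : EReal := ⨆ f : B, ((f.1 x : ℝ) : EReal)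

/-- real-valued support function -/
def sigmaR (B : Set (X →L[ℝ] ℝ)) (x : X) : ℝ := ⨆ f : B, f.1 x

/-- ε-subdifferential of a real-valued function -/
def esubdiff (ε : ℝ) (f : X → ℝ) (x : X) : Set (X →L[ℝ] ℝ) :=
  {g | ∀ x' : X, g (x' - x) + f x ≤ f x' + ε}

/-- convexity for EReal-valued functions -/
def ConvexFnE (f : X → EReal) : Prop :=
  ∀ x y : X, ∀ a b : ℝ, 0 ≤ a → 0 ≤ b → a + b = 1 →
    f (a • x + b • y) ≤ (a : EReal) * f x + (b : EReal) * f y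

/-- proper EReal-valued function -/
def ProperE (f : X → EReal) : Prop := (∃ x, f x < ⊤) ∧ ∀ x, f x ≠ ⊥

variable (X) in
/-- barreledness: every convex closed absorbing set is a neighborhood of 0 -/
def BarrelProp : Prop :=
  ∀ C : Set X, Convex ℝ C → IsClosed C → Absorbent ℝ C → C ∈ 𝓝 (0 : X)

/-!
Let `C` be a closed convex absorbing set and `B` its one-sided polar. Absorbency makes `B`
pointwise bounded, and by Hahn–Banach `C` is the prepolar of `B`, so it suffices to show that `B`
is equicontinuous. If `C ≠ X`, Hahn–Banach also gives a functional `g ≠ 0`. The graph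
`{0} × B ∪ {(x, g x • g) | f x ≤ (g x)² for all f ∈ B}` is monotone, and pointwise boundedness
of `B` puts every large multiple of a point `y` with `g y ≠ 0` in its domain, so `0` lies in the
core of the convex hull of its domain. Any ε-maximal monotone extension `T` is therefore locally
bounded at `0`, and since `T ⊇ {0} × B`, this is exactly equicontinuity of `B`.
-/

open Filter

def oneSidedPolar (C : Set X) : Set (X →L[ℝ] ℝ) := {f | ∀ y ∈ C, f y ≤ 1}

-- The domain condition is exactly what makes the union with `{0} × B` monotone.
def rankOneOn (B : Set (X →L[ℝ] ℝ)) (g : X →L[ℝ] ℝ) : Set (X × (X →L[ℝ] ℝ)) :=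
  {p | (∀ f ∈ B, f p.1 ≤ g p.1 * g p.1) ∧ p.2 = g p.1 • g}

theorem zero_mem_oneSidedPolar (C : Set X) : (0 : X →L[ℝ] ℝ) ∈ oneSidedPolar C :=
  fun _ _ => zero_le_one

theorem ptwBounded_oneSidedPolar {C : Set X} (hC : Absorbent ℝ C) :
    PtwBounded (oneSidedPolar C) := by
  intro y
  obtain ⟨r, hr, hsub⟩ := (hC y).exists_pos
  obtain ⟨z, hz, rfl⟩ := hsub r (by simp [abs_of_pos hr]) rfl
  obtain ⟨z', hz', hzz'⟩ := hsub (-r) (by simp [abs_of_pos hr]) rfl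
  refine ⟨r, fun f hf => abs_le.2 ⟨?_, ?_⟩⟩
  · rw [← hzz', map_smul, smul_eq_mul]
    nlinarith [hf z' hz']
  · rw [map_smul, smul_eq_mul]
    nlinarith [hf z hz]

section HahnBanach

variable [IsTopologicalAddGroup X] [ContinuousSMul ℝ X] [LocallyConvexSpace ℝ X]

theorem exists_mem_oneSidedPolar_one_lt {C : Set X} (hCc : Convex ℝ C) (hCcl : IsClosed C)
    (h0C : (0 : X) ∈ C) {v : X} (hv : v ∉ C) : ∃ f ∈ oneSidedPolar C, 1 < f v := by
  obtain ⟨f, s, hfs, hsv⟩ := geometric_hahn_banach_closed_point hCc hCcl hv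
  have hs : 0 < s := by simpa using hfs 0 h0C
  refine ⟨s⁻¹ • f, fun y hy => ?_, ?_⟩
  · simpa [inv_mul_le_iff₀ hs] using (hfs y hy).le
  · simpa [lt_inv_mul_iff₀ hs] using hsv

theorem mem_nhds_zero_of_equicont_oneSidedPolar {C : Set X} (hCc : Convex ℝ C)
    (hCcl : IsClosed C) (h0C : (0 : X) ∈ C) (hB : Equicont (oneSidedPolar C)) : C ∈ 𝓝 (0 : X) := by
  obtain ⟨V, hV, hbd⟩ := hB
  refine mem_of_superset hV fun v hv => ?_
  by_contra hvC
  obtain ⟨f, hf, hfv⟩ := exists_mem_oneSidedPolar_one_lt hCc hCcl h0C hvC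
  linarith [le_abs_self (f v), hbd f hf v hv]

end HahnBanach

theorem EMonotone.mono {ε ε' : ℝ} {T : Set (X × (X →L[ℝ] ℝ))} (hT : EMonotone ε T)
    (hεε' : ε ≤ ε') : EMonotone ε' T :=
  fun p hp q hq => (neg_le_neg hεε').trans (hT p hp q hq)

theorem EMonotone.exists_maxEMonotone_superset {ε : ℝ} {S : Set (X × (X →L[ℝ] ℝ))}
    (hS : EMonotone ε S) (hne : S.Nonempty) : ∃ T, S ⊆ T ∧ MaxEMonotone ε T := by
  obtain ⟨T, hST, hT⟩ := zorn_subset_nonempty {T | EMonotone ε T}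
    (fun c hc hchain _ => ⟨⋃₀ c, fun p ⟨s₁, hs₁, hp⟩ q ⟨s₂, hs₂, hq⟩ => by
      rcases hchain.total hs₁ hs₂ with h | h
      · exact hc hs₂ p (h hp) q hq
      · exact hc hs₁ p hp q (h hq), fun _ => subset_sUnion_of_mem⟩) S hS
  exact ⟨T, hST, hne.mono hST, hT.1, fun U hU hTU => (hT.2 hU hTU).antisymm hTU⟩

theorem emonotone_zero_prod_union_rankOneOn (B : Set (X →L[ℝ] ℝ)) (g : X →L[ℝ] ℝ) :
    EMonotone 0 ({0} ×ˢ B ∪ rankOneOn B g) := by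
  rintro ⟨x, f⟩ hp ⟨y, f'⟩ hq
  simp only [neg_zero]
  rcases hp with ⟨rfl : x = 0, hf⟩ | ⟨hx, rfl : f = g x • g⟩ <;>
    rcases hq with ⟨rfl : y = 0, hf'⟩ | ⟨hy, rfl : f' = g y • g⟩
  · simp
  · simpa using hy f hf
  · simpa using hx f' hf'
  · simp only [FunLike.coe_smul, Pi.smul_apply, smul_eq_mul]
    nlinarith [sq_nonneg (g x - g y)]

theorem PtwBounded.eventually_smul_mem_fst_rankOneOn {B : Set (X →L[ℝ] ℝ)} (hB : PtwBounded B)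
    (g : X →L[ℝ] ℝ) {y : X} (hy : g y ≠ 0) :
    ∀ᶠ r : ℝ in atTop, r • y ∈ Prod.fst '' rankOneOn B g := by
  obtain ⟨M, hM⟩ := hB y
  have hgy : 0 < g y * g y := mul_self_pos.2 hy
  filter_upwards [eventually_ge_atTop (M / (g y * g y)), eventually_ge_atTop (0 : ℝ)] with r hrM hr0
  refine ⟨(r • y, g (r • y) • g), ⟨fun f hf => ?_, rfl⟩, rfl⟩
  have hfy : f y ≤ r * (g y * g y) :=
    ((le_abs_self _).trans (hM f hf)).trans ((div_le_iff₀ hgy).1 hrM)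
  simp only [map_smul, smul_eq_mul]
  nlinarith [mul_le_mul_of_nonneg_left hfy hr0]

theorem Convex.zero_mem_core {E : Type*} [AddCommGroup E] [Module ℝ E] {K : Set E}
    (hK : Convex ℝ K) (h0 : (0 : E) ∈ K) (h : ∀ x : E, ∃ R > (0 : ℝ), R • x ∈ K) :
    (0 : E) ∈ core K := by
  intro x
  obtain ⟨R, hR, hRx⟩ := h x
  refine ⟨R, hR, fun l hl0 hlR => ?_⟩
  have := hK.smul_mem_of_zero_mem h0 hRx ⟨div_nonneg hl0 hR.le, (div_le_one hR).2 hlR⟩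
  rwa [smul_smul, div_mul_cancel₀ _ hR.ne', ← zero_add (l • x)] at this

theorem zero_mem_core_convexHull_of_fst_rankOneOn_subset {B : Set (X →L[ℝ] ℝ)}
    (hB : PtwBounded B) {g : X →L[ℝ] ℝ} {w : X} (hw : g w ≠ 0) {D : Set X} (h0 : (0 : X) ∈ D)
    (hD : Prod.fst '' rankOneOn B g ⊆ D) : (0 : X) ∈ core (convexHull ℝ D) := by
  refine (convex_convexHull ℝ D).zero_mem_core (subset_convexHull ℝ D h0) fun x => ?_
  set t := (|g x| + 1) / g w
  have ht : t * g w = |g x| + 1 := div_mul_cancel₀ _ hw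
  have h₁ : g (x + t • w) ≠ 0 := by
    rw [map_add, map_smul, smul_eq_mul, ht]
    linarith [neg_abs_le (g x)]
  have h₂ : g (x - t • w) ≠ 0 := by
    rw [map_sub, map_smul, smul_eq_mul, ht]
    linarith [le_abs_self (g x)]
  obtain ⟨r, ⟨hr₁, hr₂⟩, hr⟩ := ((hB.eventually_smul_mem_fst_rankOneOn g h₁).and
    (hB.eventually_smul_mem_fst_rankOneOn g h₂)).and (eventually_gt_atTop 0) |>.exists
  refine ⟨r, hr, ?_⟩
  have hmid := convex_convexHull ℝ D (subset_convexHull ℝ D (hD hr₁))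
    (subset_convexHull ℝ D (hD hr₂)) (by norm_num : (0 : ℝ) ≤ 1 / 2)
    (by norm_num : (0 : ℝ) ≤ 1 / 2) (by norm_num)
  convert hmid using 1
  module

theorem LocBddAt.equicont_of_prod_subset {T : Set (X × (X →L[ℝ] ℝ))} {x : X}
    (hT : LocBddAt T x) {B : Set (X →L[ℝ] ℝ)} (hB : {x} ×ˢ B ⊆ T) : Equicont B := by
  obtain ⟨U, hU, V, hV, hbd⟩ := hT
  exact ⟨V, hV, fun f hf => hbd f ⟨(x, f), hB ⟨rfl, hf⟩, mem_of_mem_nhds hU, rfl⟩⟩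

theorem stmt18 [IsTopologicalAddGroup X] [ContinuousSMul ℝ X] [LocallyConvexSpace ℝ X] (ε : ℝ) (hε : 0 ≤ ε)
    (h : ∀ T : Set (X × (X →L[ℝ] ℝ)), MaxEMonotone ε T →
      ∀ x ∈ core (convexHull ℝ (Prod.fst '' T)), LocBddAt T x) :
    BarrelProp X := by
  intro C hCc hCcl hCab
  by_cases hC : C = univ
  · simp [hC]
  have h0C : (0 : X) ∈ C := hCab.zero_mem
  obtain ⟨w, hw⟩ := (ne_univ_iff_exists_notMem C).1 hC
  obtain ⟨g, -, hgw⟩ := exists_mem_oneSidedPolar_one_lt hCc hCcl h0C hw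
  have h00 : ((0 : X), (0 : X →L[ℝ] ℝ)) ∈ {0} ×ˢ oneSidedPolar C :=
    ⟨rfl, zero_mem_oneSidedPolar C⟩
  obtain ⟨T, hGT, hT⟩ := ((emonotone_zero_prod_union_rankOneOn (oneSidedPolar C) g).mono hε)
    |>.exists_maxEMonotone_superset ⟨_, Or.inl h00⟩
  have hcore : (0 : X) ∈ core (convexHull ℝ (Prod.fst '' T)) :=
    zero_mem_core_convexHull_of_fst_rankOneOn_subset (ptwBounded_oneSidedPolar hCab)
      (one_pos.trans hgw).ne' ⟨_, hGT (Or.inl h00), rfl⟩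
      (image_mono (subset_union_right.trans hGT))
  exact mem_nhds_zero_of_equicont_oneSidedPolar hCc hCcl h0C
    ((h T hT 0 hcore).equicont_of_prod_subset (subset_union_left.trans hGT))
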